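/- Reachability reduces to co-occurrence: given a transition system over multisets with per-function validity predicates, if we add a fresh auxiliary function g whose validity predicate is identically true (g can always be scheduled) and which does not affect any other validity predicate (i.e., every V_h is invariant under adding or removing copies of g from the state), then f is reachable from the empty state in the original system if and only if f and g co-occur in some reachable state of the extended system. -/

import Mathlib

/-- One step, with additions restricted to functions satisfying `A`. -/
def Step {F : Type*} [DecidableEq F] (A : F → Prop) (V : F → Multiset F → Prop)
    (σ τ : Multiset F) : Prop :=
  (∃ h : F, A h ∧ V h σ ∧ τ = h ::ₘ σ) ∨ (∃ h ∈ σ, τ = σ.erase h)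

def Reach {F : Type*} [DecidableEq F] (A : F → Prop) (V : F → Multiset F → Prop)
    (σ : Multiset F) : Prop :=
  Relation.ReflTransGen (Step A V) 0 σ

/-!
Adding `g` is always allowed and invisible to every other validity predicate, so a run of the
original system, followed by one addition of `g`, is a run of the extended one. Conversely,
erasing every copy of `g` from the states of an extended run leaves a run of the original system:
steps touching `g` become stutters, and all other steps stay valid.
-/

namespace Multiset

variable {α : Type*} [DecidableEq α] {p : α → Prop} [DecidablePred p] {a : α}

theorem filter_erase_of_pos (s : Multiset α) (ha : p a) :
    (s.erase a).filter p = (s.filter p).erase a := by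
  rw [← sub_singleton, filter_sub, ← sub_singleton, filter_singleton, if_pos ha]

theorem filter_erase_of_neg (s : Multiset α) (ha : ¬p a) :
    (s.erase a).filter p = s.filter p := by
  rw [← sub_singleton, filter_sub, filter_singleton, if_neg ha, empty_eq_zero, tsub_zero]

end Multiset

section

variable {F : Type*} [DecidableEq F] {A B : F → Prop} {V : F → Multiset F → Prop}
  {σ τ : Multiset F}

theorem Step.mono (hAB : ∀ h, A h → B h) (hστ : Step A V σ τ) : Step B V σ τ :=
  hστ.imp (fun ⟨h, hA, hV, hτ⟩ => ⟨h, hAB h hA, hV, hτ⟩) id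

theorem Reach.mono (hAB : ∀ h, A h → B h) (hσ : Reach A V σ) : Reach B V σ :=
  Relation.ReflTransGen.mono (fun _ _ => Step.mono hAB) _ _ hσ

theorem Step.reflTransGen_filter {p : F → Prop} [DecidablePred p]
    (hV : ∀ h, p h → ∀ σ, V h σ → V h (σ.filter p)) (hστ : Step A V σ τ) :
    Relation.ReflTransGen (Step (fun h => A h ∧ p h) V) (σ.filter p) (τ.filter p) := by
  rcases hστ with ⟨h, hA, hVh, rfl⟩ | ⟨h, hmem, rfl⟩ <;> by_cases hp : p h
  · rw [Multiset.filter_cons_of_pos _ hp]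
    exact .single (.inl ⟨h, ⟨hA, hp⟩, hV h hp σ hVh, rfl⟩)
  · rw [Multiset.filter_cons_of_neg _ hp]
  · rw [Multiset.filter_erase_of_pos _ hp]
    exact .single (.inr ⟨h, Multiset.mem_filter.2 ⟨hmem, hp⟩, rfl⟩)
  · rw [Multiset.filter_erase_of_neg _ hp]

theorem Reach.filter {p : F → Prop} [DecidablePred p]
    (hV : ∀ h, p h → ∀ σ, V h σ → V h (σ.filter p)) (hσ : Reach A V σ) :
    Reach (fun h => A h ∧ p h) V (σ.filter p) := by
  have := Relation.ReflTransGen.lift' (Multiset.filter p)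
    (fun _ _ => Step.reflTransGen_filter hV) 0 σ hσ
  rwa [Function.onFun, Multiset.filter_zero] at this

end

theorem reach_reduces_to_coOccur {F : Type*} [DecidableEq F]
    (V : F → Multiset F → Prop) (g : F)
    (hg : ∀ σ, V g σ)
    (hinv : ∀ h : F, h ≠ g → ∀ σ : Multiset F, V h σ ↔ V h (σ.filter (· ≠ g)))
    (f : F) (hfg : f ≠ g) :
    (∃ σ : Multiset F, Reach (fun h => h ≠ g) V σ ∧ f ∈ σ) ↔
      (∃ σ : Multiset F, Reach (fun _ => True) V σ ∧ f ∈ σ ∧ g ∈ σ) := by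
  constructor
  · rintro ⟨σ, hσ, hf⟩
    have hσg : Reach (fun _ => True) V (g ::ₘ σ) :=
      (hσ.mono fun _ _ => trivial).tail (.inl ⟨g, trivial, hg σ, rfl⟩)
    exact ⟨g ::ₘ σ, hσg, Multiset.mem_cons_of_mem hf, Multiset.mem_cons_self g σ⟩
  · rintro ⟨σ, hσ, hf, -⟩
    have hσf : Reach (fun h => h ≠ g) V (σ.filter (· ≠ g)) :=
      (hσ.filter fun h hh τ => (hinv h hh τ).1).mono fun _ => And.right
    exact ⟨σ.filter (· ≠ g), hσf, Multiset.mem_filter.2 ⟨hf, hfg⟩⟩
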